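/- Let X ∈ S^m_+, Y ∈ S^m, and μ ≥ 0. Then for every Z ∈ S^m, ‖X∘(Y∘Z) − Y∘(X∘Z)‖_F ≤ ‖X∘Y − μI‖_F · ‖Z‖_F. (That is, ‖L_X L_Y − L_Y L_X‖₂ ≤ ‖X∘Y − μI‖_F, where L_X(Z) := X∘Z and ‖·‖₂ is the operator norm induced by ‖·‖_F on S^m.) -/

import Mathlib

noncomputable def jordan {ι : Type*} [Fintype ι] (X Y : Matrix ι ι ℝ) : Matrix ι ι ℝ :=
  (2:ℝ)⁻¹ • (X * Y + Y * X)

noncomputable def frobNorm {ι : Type*} [Fintype ι] (A : Matrix ι ι ℝ) : ℝ :=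
  Real.sqrt (∑ i, ∑ j, (A i j) ^ 2)

/-! Expanding the Jordan products shows `L_X L_Y - L_Y L_X = ¼ ad_[X,Y]`, and `‖[C, Z]‖ ≤ 2‖C‖‖Z‖`
in any normed ring, so it suffices to show `‖[X, Y]‖ ≤ 2‖X∘Y - μI‖`. With `S = X^{1/2}`, a trace
computation gives `‖[X, Y]‖² + 4‖SYS - μI‖² = 4‖X∘Y - μI‖²`. -/

open Matrix

attribute [local instance] Matrix.frobeniusNormedAddCommGroup Matrix.frobeniusNormedRing
  Matrix.frobeniusNormedSpace

theorem norm_lie_le {R : Type*} [NonUnitalSeminormedRing R] (a b : R) :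
    ‖⁅a, b⁆‖ ≤ 2 * ‖a‖ * ‖b‖ :=
  calc ‖a * b - b * a‖ ≤ ‖a * b‖ + ‖b * a‖ := norm_sub_le _ _
    _ ≤ ‖a‖ * ‖b‖ + ‖b‖ * ‖a‖ := add_le_add (norm_mul_le a b) (norm_mul_le b a)
    _ = 2 * ‖a‖ * ‖b‖ := by ring

theorem Matrix.frobenius_norm_sq_eq_trace {m n : Type*} [Fintype m] [Fintype n]
    (A : Matrix m n ℝ) : ‖A‖ ^ 2 = (Aᵀ * A).trace := by
  rw [frobenius_norm_def, ← Real.sqrt_eq_rpow, Real.sq_sqrt (by positivity), Finset.sum_comm]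
  simp [trace, mul_apply, sq]

section Jordan

variable {ι : Type*} [Fintype ι]

theorem frobNorm_eq_norm (A : Matrix ι ι ℝ) : frobNorm A = ‖A‖ := by
  rw [frobNorm, frobenius_norm_def, Real.sqrt_eq_rpow]
  simp only [Real.norm_eq_abs, Real.rpow_two, sq_abs]

theorem jordan_jordan_sub_jordan_jordan (X Y Z : Matrix ι ι ℝ) :
    jordan X (jordan Y Z) - jordan Y (jordan X Z) = (4 : ℝ)⁻¹ • ⁅⁅X, Y⁆, Z⁆ := by
  simp only [jordan, Ring.lie_def, smul_add, Matrix.smul_mul, Matrix.mul_smul, mul_add, add_mul,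
    sub_mul, mul_sub, smul_sub, smul_smul, mul_assoc]
  norm_num
  module

variable [DecidableEq ι]

theorem norm_lie_sq_add_four_mul_norm_sq_eq {X Y S : Matrix ι ι ℝ} (hY : Y.IsSymm)
    (hS : S.IsSymm) (hSX : S * S = X) (μ : ℝ) :
    ‖⁅X, Y⁆‖ ^ 2 + 4 * ‖S * Y * S - μ • 1‖ ^ 2 = 4 * ‖jordan X Y - μ • 1‖ ^ 2 := by
  have hX : Xᵀ = X := by rw [← hSX, transpose_mul, hS.eq]
  have cyc : ∀ A B : Matrix ι ι ℝ, (A * B).trace = (B * A).trace := trace_mul_comm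
  have tr_YX : (Y * X).trace = (X * Y).trace := cyc Y X
  have tr_SYS : (S * (Y * S)).trace = (X * Y).trace := by rw [cyc, mul_assoc, hSX, cyc]
  have tr_YXYX : (Y * (X * (Y * X))).trace = (X * (Y * (X * Y))).trace := by
    rw [cyc, mul_assoc, mul_assoc]
  have tr_SYS_sq : (S * (Y * (S * (S * (Y * S))))).trace = (X * (Y * (X * Y))).trace := by
    rw [← mul_assoc S S, hSX, cyc, mul_assoc, mul_assoc, mul_assoc, hSX, tr_YXYX]
  simp only [frobenius_norm_sq_eq_trace, jordan, Ring.lie_def, transpose_sub, transpose_mul,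
    transpose_smul, transpose_add, transpose_one, hX, hY.eq, hS.eq, Matrix.sub_mul,
    Matrix.mul_sub, Matrix.add_mul, Matrix.mul_add, Matrix.smul_mul, Matrix.mul_smul,
    Matrix.mul_one, Matrix.one_mul, trace_sub, trace_add, trace_smul, smul_eq_mul, mul_assoc]
  linear_combination 4 * tr_SYS_sq - 2 * tr_YXYX - 8 * μ * tr_SYS + 4 * μ * tr_YX

theorem Matrix.PosSemidef.norm_lie_le_two_mul_norm_jordan_sub {X Y : Matrix ι ι ℝ}
    (hX : X.PosSemidef) (hY : Y.IsSymm) (μ : ℝ) : ‖⁅X, Y⁆‖ ≤ 2 * ‖jordan X Y - μ • 1‖ := by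
  open scoped MatrixOrder in
  have hS : (CFC.sqrt X).IsSymm := isHermitian_iff_isSymm.1 (CFC.sqrt_nonneg X).posSemidef.1
  have key := norm_lie_sq_add_four_mul_norm_sq_eq hY hS (CFC.sqrt_mul_sqrt_self X hX.nonneg) μ
  refine (pow_le_pow_iff_left₀ (norm_nonneg _) (by positivity) two_ne_zero).1 ?_
  nlinarith [sq_nonneg ‖CFC.sqrt X * Y * CFC.sqrt X - μ • 1‖]

end Jordan

theorem lyapunov_commutator_opnorm_bound_general {m : ℕ} (X Y : Matrix (Fin m) (Fin m) ℝ)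
    (hX : X.PosSemidef) (hY : Y.IsSymm) (μ : ℝ) :
    ∀ Z : Matrix (Fin m) (Fin m) ℝ, Z.IsSymm →
      frobNorm (jordan X (jordan Y Z) - jordan Y (jordan X Z))
        ≤ frobNorm (jordan X Y - μ • (1 : Matrix (Fin m) (Fin m) ℝ)) * frobNorm Z := by
  intro Z _
  simp only [frobNorm_eq_norm, jordan_jordan_sub_jordan_jordan, norm_smul]
  have hXY := hX.norm_lie_le_two_mul_norm_jordan_sub hY μ
  calc ‖(4 : ℝ)⁻¹‖ * ‖⁅⁅X, Y⁆, Z⁆‖ ≤ 4⁻¹ * (2 * ‖⁅X, Y⁆‖ * ‖Z‖) := by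
        rw [norm_inv, Real.norm_ofNat]
        gcongr
        exact norm_lie_le _ _
    _ ≤ ‖jordan X Y - μ • 1‖ * ‖Z‖ := by nlinarith [norm_nonneg Z]

/-- ‖L_X L_Y − L_Y L_X‖₂ ≤ ‖X∘Y − μI‖_F for X psd, Y symmetric, μ ≥ 0. -/
theorem lyapunov_commutator_opnorm_bound {m : ℕ} (X Y : Matrix (Fin m) (Fin m) ℝ)
    (hX : X.PosSemidef) (hY : Y.IsSymm) (μ : ℝ) (hμ : 0 ≤ μ) :
    ∀ Z : Matrix (Fin m) (Fin m) ℝ, Z.IsSymm →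
      frobNorm (jordan X (jordan Y Z) - jordan Y (jordan X Z))
        ≤ frobNorm (jordan X Y - μ • (1 : Matrix (Fin m) (Fin m) ℝ)) * frobNorm Z :=
  lyapunov_commutator_opnorm_bound_general X Y hX hY μ
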